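/- arXiv:1010.4960 — 3 statements merged into one kernel-verified Lean document; each statement's English description precedes it below -/
import Mathlib

section
/- Let n ≥ 3 be an integer, let ξ ∈ ℝⁿ and ε > 0, and define the standard bubble u : ℝⁿ → ℝ by u(x) = (ε/(ε² + ‖x − ξ‖²))^{(n−2)/2}. Then u is positive and smooth on ℝⁿ, and it satisfies the Yamabe equation of the round sphere, Δu(x) + n(n−2)·u(x)^{(n+2)/(n−2)} = 0, for every x ∈ ℝⁿ, where Δu(x) denotes the Euclidean Laplacian of u at x (the sum over an orthonormal basis (e_i) of the second directional derivatives of u at x in the directions e_i). -/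
open scoped BigOperators RealInnerProductSpace

section aux
variable {n : ℕ}

lemma hasFDerivAt_W (ξ x : EuclideanSpace ℝ (Fin n)) (ε : ℝ) :
    HasFDerivAt (fun y : EuclideanSpace ℝ (Fin n) => ε ^ 2 + ⟪y - ξ, y - ξ⟫)
      ((2 : ℝ) • innerSL ℝ (x - ξ)) x := by
  have h1 : HasFDerivAt (fun y : EuclideanSpace ℝ (Fin n) => y - ξ)
      (ContinuousLinearMap.id ℝ _) x := (hasFDerivAt_id x).sub_const ξ
  have h2 := (hasFDerivAt_const (ε ^ 2) x).add (h1.inner ℝ h1)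
  refine h2.congr_fderiv ?_
  ext v
  simp only [ContinuousLinearMap.smul_apply, innerSL_apply_apply, ContinuousLinearMap.add_apply,
    ContinuousLinearMap.zero_apply, ContinuousLinearMap.coe_comp', Function.comp_apply,
    ContinuousLinearMap.prod_apply, ContinuousLinearMap.id_apply, fderivInnerCLM_apply,
    zero_add, smul_eq_mul]
  rw [real_inner_comm]
  ring

lemma W_pos (ξ x : EuclideanSpace ℝ (Fin n)) {ε : ℝ} (hε : 0 < ε) :
    0 < ε ^ 2 + ⟪x - ξ, x - ξ⟫ :=
  add_pos_of_pos_of_nonneg (pow_pos hε 2) real_inner_self_nonneg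

-- derivative of  y ↦ K * (W y)^(e)
lemma hasFDerivAt_KW (ξ x : EuclideanSpace ℝ (Fin n)) {ε : ℝ} (hε : 0 < ε) (K e : ℝ) :
    HasFDerivAt (fun y : EuclideanSpace ℝ (Fin n) => K * (ε ^ 2 + ⟪y - ξ, y - ξ⟫) ^ e)
      ((K * e * (ε ^ 2 + ⟪x - ξ, x - ξ⟫) ^ (e - 1) * 2) • innerSL ℝ (x - ξ)) x := by
  have h := ((hasFDerivAt_W ξ x ε).rpow_const (p := e)
    (Or.inl (W_pos ξ x hε).ne')).const_mul K
  refine h.congr_fderiv ?_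
  ext v
  simp only [ContinuousLinearMap.smul_apply, smul_eq_mul]
  ring

end aux

/-- The Euclidean Laplacian of `f : ℝⁿ → ℝ` at `x`: the sum, over the standard
orthonormal basis of `EuclideanSpace ℝ (Fin n)`, of the second directional
derivatives of `f` at `x`. -/
noncomputable def euclideanLaplacian {n : ℕ} (f : EuclideanSpace ℝ (Fin n) → ℝ)
    (x : EuclideanSpace ℝ (Fin n)) : ℝ :=
  ∑ i : Fin n,
    fderiv ℝ (fun y => fderiv ℝ f y (EuclideanSpace.basisFun (Fin n) ℝ i)) x
      (EuclideanSpace.basisFun (Fin n) ℝ i)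

/-- The standard bubble `u(x) = (ε/(ε² + ‖x − ξ‖²))^{(n−2)/2}` is positive and smooth,
and satisfies `Δu + n(n−2) u^{(n+2)/(n−2)} = 0` on `ℝⁿ`. -/
theorem standard_bubble_solves_yamabe (n : ℕ) (hn : 3 ≤ n)
    (ξ : EuclideanSpace ℝ (Fin n)) (ε : ℝ) (hε : 0 < ε)
    (u : EuclideanSpace ℝ (Fin n) → ℝ)
    (hu : ∀ x, u x = (ε / (ε ^ 2 + ‖x - ξ‖ ^ 2)) ^ (((n : ℝ) - 2) / 2)) :
    (∀ x, 0 < u x) ∧ ContDiff ℝ (⊤ : ℕ∞) u ∧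
      ∀ x, euclideanLaplacian u x
          + (n : ℝ) * ((n : ℝ) - 2) * u x ^ (((n : ℝ) + 2) / ((n : ℝ) - 2)) = 0 := by
  set p : ℝ := ((n : ℝ) - 2) / 2 with hp
  set W : EuclideanSpace ℝ (Fin n) → ℝ := fun y => ε ^ 2 + ⟪y - ξ, y - ξ⟫ with hWdef
  have hWpos : ∀ x, 0 < W x := fun x => W_pos ξ x hε
  have hWnorm : ∀ x, W x = ε ^ 2 + ‖x - ξ‖ ^ 2 := by
    intro x; simp only [hWdef]; rw [real_inner_self_eq_norm_sq]
  -- rewrite u in product form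
  have hn2 : (0:ℝ) < (n : ℝ) - 2 := by
    have : (3:ℝ) ≤ (n:ℝ) := by exact_mod_cast hn
    linarith
  have hu2 : ∀ x, u x = ε ^ p * (W x) ^ (-p) := by
    intro x
    rw [hu x, ← hWnorm x, Real.div_rpow hε.le (hWpos x).le, Real.rpow_neg (hWpos x).le,
      div_eq_mul_inv]
  have hval : u = fun x => ε ^ p * (W x) ^ (-p) := funext hu2
  -- positivity
  have hpos : ∀ x, 0 < u x := by
    intro x
    rw [hu2 x]
    exact mul_pos (Real.rpow_pos_of_pos hε p) (Real.rpow_pos_of_pos (hWpos x) _)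
  refine ⟨hpos, ?_, ?_⟩
  · -- smoothness
    rw [hval]
    have hWc : ContDiff ℝ (⊤ : ℕ∞) W := by
      apply ContDiff.add contDiff_const
      exact ((contDiff_id.sub contDiff_const).inner ℝ (contDiff_id.sub contDiff_const))
    exact contDiff_const.mul (hWc.rpow_const_of_ne (fun x => (hWpos x).ne'))
  · -- the PDE
    intro x
    -- first derivative
    have hder : ∀ y, HasFDerivAt u
        ((ε ^ p * (-p) * (W y) ^ (-p - 1) * 2) • innerSL ℝ (y - ξ)) y := by
      intro y
      rw [hval]
      exact hasFDerivAt_KW ξ y hε (ε ^ p) (-p)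
    -- the first directional derivative as a function
    have hfun : ∀ i : Fin n, (fun y => fderiv ℝ u y (EuclideanSpace.basisFun (Fin n) ℝ i))
        = fun y => (ε ^ p * (-p) * 2) * ((W y) ^ (-p - 1)) * (y i - ξ i) := by
      intro i
      funext y
      rw [(hder y).fderiv]
      simp only [ContinuousLinearMap.smul_apply, innerSL_apply_apply, smul_eq_mul,
        EuclideanSpace.basisFun_apply, EuclideanSpace.inner_single_right, RCLike.conj_to_real]
      have : (y - ξ) i = y i - ξ i := rfl
      rw [this]
      ring
    -- second directional derivatives
    have hsec : ∀ i : Fin n,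
        fderiv ℝ (fun y => fderiv ℝ u y (EuclideanSpace.basisFun (Fin n) ℝ i)) x
          (EuclideanSpace.basisFun (Fin n) ℝ i)
        = (ε ^ p * (-p) * 2) * ((W x) ^ (-p - 1))
          + ((ε ^ p * (-p) * 2) * (-p - 1) * (W x) ^ (-p - 1 - 1) * 2) * (x i - ξ i) ^ 2 := by
      intro i
      rw [hfun i]
      have hc := hasFDerivAt_KW ξ x hε (ε ^ p * (-p) * 2) (-p - 1)
      have hg : HasFDerivAt (fun y : EuclideanSpace ℝ (Fin n) => y i - ξ i)
          ((EuclideanSpace.proj i : EuclideanSpace ℝ (Fin n) →L[ℝ] ℝ)) x := by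
        have := ((EuclideanSpace.proj i : EuclideanSpace ℝ (Fin n) →L[ℝ] ℝ)).hasFDerivAt
          (x := x) |>.sub_const (ξ i)
        exact this
      have hmul : HasFDerivAt (fun y => ε ^ p * (-p) * 2 * W y ^ (-p - 1) * (y i - ξ i)) _ x :=
        hc.mul hg
      rw [hmul.fderiv]
      simp only [ContinuousLinearMap.add_apply, ContinuousLinearMap.smul_apply,
        innerSL_apply_apply, smul_eq_mul, EuclideanSpace.basisFun_apply,
        EuclideanSpace.inner_single_right, RCLike.conj_to_real, PiLp.proj_apply,
        EuclideanSpace.single_apply]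
      have h1 : (x - ξ) i = x i - ξ i := rfl
      rw [h1]
      simp only [if_pos rfl, if_true]
      ring
    -- sum up
    have hlap : euclideanLaplacian u x
        = (n : ℝ) * ((ε ^ p * (-p) * 2) * ((W x) ^ (-p - 1)))
          + ((ε ^ p * (-p) * 2) * (-p - 1) * (W x) ^ (-p - 1 - 1) * 2) * ⟪x - ξ, x - ξ⟫ := by
      rw [euclideanLaplacian]
      rw [Finset.sum_congr rfl (fun i _ => hsec i)]
      rw [Finset.sum_add_distrib, Finset.sum_const, ← Finset.mul_sum]
      have : ⟪x - ξ, x - ξ⟫ = ∑ i : Fin n, (x i - ξ i) ^ 2 := by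
        rw [PiLp.inner_apply]
        congr 1
        funext i
        have h1 : (x - ξ) i = x i - ξ i := rfl
        simp [h1, sq]
      rw [this]
      simp [Finset.card_univ, mul_comm, nsmul_eq_mul]
    -- rpow algebra
    set s : ℝ := ⟪x - ξ, x - ξ⟫ with hs
    have hWx : W x = ε ^ 2 + s := rfl
    have hA : (W x) ^ (-p - 1) = (W x) * (W x) ^ (-p - 2) := by
      rw [show (-p - 1 : ℝ) = 1 + (-p - 2) by ring, Real.rpow_add (hWpos x), Real.rpow_one]
    have hA2 : (W x) ^ (-p - 1 - 1) = (W x) ^ (-p - 2) := by congr 1; ring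
    -- the nonlinear term
    have hpow : u x ^ (((n : ℝ) + 2) / ((n : ℝ) - 2))
        = ε ^ p * ε ^ 2 * (W x) ^ (-p - 2) := by
      have hdiv : 0 ≤ ε / W x := div_nonneg hε.le (hWpos x).le
      have hq : p * (((n : ℝ) + 2) / ((n : ℝ) - 2)) = p + 2 := by
        rw [hp]; field_simp; ring
      rw [hu x, ← hWnorm x, ← Real.rpow_mul hdiv, hq,
        Real.div_rpow hε.le (hWpos x).le, div_eq_mul_inv, ← Real.rpow_neg (hWpos x).le,
        show -(p + 2) = -p - 2 by ring, Real.rpow_add hε, Real.rpow_two]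
    rw [hlap, hA, hA2, hpow, hWx, hp]
    ring
end

section
/- Let n ≥ 52 be an integer and set a = (n−8)/(n+4), b = (n+8)/(n−10), and D = 9 − 8(n+8)(n−8)/((n+4)(n−10)). Then 0 < D < 9, and there is a unique positive real number ε_* satisfying (3 + √D)·ε_*² = 2(n−8)/(n+4). Moreover, the polynomial function p(ε) = a·ε⁴ − 2ε⁶ + b·ε⁸ attains a strict local maximum on (0,∞) at ε = ε_*; equivalently, since F(0,ε) = −I(n)·S·p(ε) with positive constants I(n) and S, the function ε ↦ F(0,ε) attains a strict local minimum at ε_*. -/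
/-- For `n ≥ 52`, with `a = (n−8)/(n+4)`, `b = (n+8)/(n−10)`, and
`D = 9 − 8(n+8)(n−8)/((n+4)(n−10))`, one has `0 < D < 9`; there is a unique
positive `ε_*` with `(3 + √D)·ε_*² = 2(n−8)/(n+4)`; the polynomial
`p(ε) = a·ε⁴ − 2ε⁶ + b·ε⁸` attains a strict local maximum on `(0,∞)` at `ε_*`;
and equivalently `ε ↦ −I·S·p(ε)` (i.e. `F(0,·)` for positive constants `I(n)`, `S`)
attains a strict local minimum there. -/
theorem reduced_energy_strict_local_min (n : ℕ) (hn : 52 ≤ n)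
    (a b D : ℝ)
    (ha : a = ((n : ℝ) - 8) / ((n : ℝ) + 4))
    (hb : b = ((n : ℝ) + 8) / ((n : ℝ) - 10))
    (hD : D = 9 - 8 * ((n : ℝ) + 8) * ((n : ℝ) - 8) / (((n : ℝ) + 4) * ((n : ℝ) - 10)))
    (p : ℝ → ℝ) (hp : ∀ ε : ℝ, p ε = a * ε ^ 4 - 2 * ε ^ 6 + b * ε ^ 8) :
    (0 < D ∧ D < 9) ∧
    (∃! εs : ℝ, 0 < εs ∧ (3 + Real.sqrt D) * εs ^ 2 = 2 * ((n : ℝ) - 8) / ((n : ℝ) + 4)) ∧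
    (∀ εs : ℝ, 0 < εs → (3 + Real.sqrt D) * εs ^ 2 = 2 * ((n : ℝ) - 8) / ((n : ℝ) + 4) →
      (∃ δ > 0, ∀ ε : ℝ, 0 < ε → ε ≠ εs → |ε - εs| < δ → p ε < p εs) ∧
      (∀ I S : ℝ, 0 < I → 0 < S →
        ∃ δ > 0, ∀ ε : ℝ, 0 < ε → ε ≠ εs → |ε - εs| < δ →
          -I * S * p εs < -I * S * p ε)) := by
  have hN : (52 : ℝ) ≤ (n : ℝ) := by exact_mod_cast hn
  set N : ℝ := (n : ℝ) with hNdef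
  have h4 : (0:ℝ) < N + 4 := by linarith
  have h10 : (0:ℝ) < N - 10 := by linarith
  have ha0 : 0 < a := by rw [ha]; exact div_pos (by linarith) h4
  have hb0 : 0 < b := by rw [hb]; exact div_pos (by linarith) h10
  -- D bounds
  have hfrac : 8 * (N + 8) * (N - 8) / ((N + 4) * (N - 10)) < 9 := by
    rw [div_lt_iff₀ (by positivity)]
    nlinarith [mul_nonneg (by linarith : (0:ℝ) ≤ N - 52) (by linarith : (0:ℝ) ≤ N - 2)]
  have hfrac0 : 0 < 8 * (N + 8) * (N - 8) / ((N + 4) * (N - 10)) :=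
    div_pos (by nlinarith) (by positivity)
  have hD0 : 0 < D := by rw [hD]; linarith
  have hD9 : D < 9 := by rw [hD]; linarith
  set s := Real.sqrt D with hsdef
  have hs0 : 0 < s := Real.sqrt_pos.mpr hD0
  have hs2 : s ^ 2 = D := Real.sq_sqrt hD0.le
  have h3s : (0:ℝ) < 3 + s := by linarith
  have hab : 8 * (a * b) = 9 - D := by
    rw [ha, hb, hD]; field_simp; ring
  -- existence and uniqueness
  have huniq : ∃! εs : ℝ, 0 < εs ∧ (3 + s) * εs ^ 2 = 2 * (N - 8) / (N + 4) := by
    set c : ℝ := 2 * (N - 8) / ((N + 4) * (3 + s)) with hc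
    have hc0 : 0 < c := div_pos (by linarith) (by positivity)
    have hprop : (3 + s) * Real.sqrt c ^ 2 = 2 * (N - 8) / (N + 4) := by
      rw [Real.sq_sqrt hc0.le, hc]; field_simp
    refine ⟨Real.sqrt c, ⟨Real.sqrt_pos.mpr hc0, hprop⟩, ?_⟩
    · rintro y ⟨hy0, hy⟩
      have hsq : y ^ 2 = Real.sqrt c ^ 2 :=
        mul_left_cancel₀ h3s.ne' (by rw [hy, hprop])
      have h0 : (y - Real.sqrt c) * (y + Real.sqrt c) = 0 := by
        linear_combination hsq
      rcases mul_eq_zero.mp h0 with h | h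
      · linarith
      · have : 0 < Real.sqrt c := Real.sqrt_pos.mpr hc0
        linarith
  refine ⟨⟨hD0, hD9⟩, huniq, ?_⟩
  intro εs hεs0 hεs
  have h1 : (3 + s) * εs ^ 2 = 2 * a := by
    rw [hεs, ha]; ring
  have key1 : 2 * b * εs ^ 4 - 3 * εs ^ 2 + a = 0 := by
    have hx : εs ^ 2 = 2 * a / (3 + s) := by
      rw [eq_div_iff h3s.ne']; linarith [h1]
    have h2 : (3 + s) ^ 2 * (2 * b * εs ^ 4 - 3 * εs ^ 2 + a) = 0 := by
      linear_combination (2 * b * (3 + s) * εs ^ 2 + 4 * a * b - 3 * (3 + s)) * h1 + a * hs2 + a * hab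
    have := mul_eq_zero.mp h2
    rcases this with h | h
    · exact absurd h (by positivity)
    · exact h
  have key2 : 3 * εs ^ 2 < 2 * a := by
    nlinarith [h1, mul_pos hs0 (pow_pos hεs0 2)]
  -- the quartic factor
  set f : ℝ → ℝ := fun ε => b * ε ^ 4 + (2 * b * εs ^ 2 - 2) * ε ^ 2 + (a - 4 * εs ^ 2 + 3 * b * εs ^ 4) with hf
  have hfεs : f εs < 0 := by
    have : f εs = 3 * εs ^ 2 - 2 * a + 3 * (2 * b * εs ^ 4 - 3 * εs ^ 2 + a) := by
      simp only [hf]; ring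
    rw [this, key1]; linarith
  have hfact : ∀ ε : ℝ, p ε - p εs = (ε ^ 2 - εs ^ 2) ^ 2 * f ε := by
    intro ε
    rw [hp, hp]
    simp only [hf]
    linear_combination (2 * εs ^ 2 * (ε ^ 2 - εs ^ 2)) * key1
  -- continuity gives a neighborhood where f < 0
  have hcont : ContinuousAt f εs := by
    simp only [hf]; fun_prop
  have hev : ∀ᶠ ε in nhds εs, f ε < 0 :=
    hcont.eventually_lt continuousAt_const hfεs
  rw [Metric.eventually_nhds_iff] at hev
  obtain ⟨δ, hδ0, hδ⟩ := hev
  have main : ∀ ε : ℝ, 0 < ε → ε ≠ εs → |ε - εs| < δ → p ε < p εs := by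
    intro ε hε0 hne hlt
    have hfε : f ε < 0 := hδ (by rwa [Real.dist_eq])
    have hsqne : ε ^ 2 - εs ^ 2 ≠ 0 := by
      intro h
      have h0 : (ε - εs) * (ε + εs) = 0 := by linear_combination h
      rcases mul_eq_zero.mp h0 with h' | h'
      · exact hne (by linarith)
      · linarith
    have hpos : 0 < (ε ^ 2 - εs ^ 2) ^ 2 := by positivity
    have heq := hfact ε
    linarith [mul_neg_of_pos_of_neg hpos hfε]
  refine ⟨⟨δ, hδ0, main⟩, ?_⟩
  intro I S hI hS
  refine ⟨δ, hδ0, fun ε hε0 hne hlt => ?_⟩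
  have hlt' := main ε hε0 hne hlt
  have : 0 < I * S * (p εs - p ε) := mul_pos (mul_pos hI hS) (by linarith)
  linarith
end

section
/- Let h : [0,∞) → ℝ be continuous with h(t) ≥ 0 for all t, and suppose h is integrable on [0,∞). Suppose there exist constants C > 0, γ ∈ (0,1), and T ≥ 0 such that ∫_t^∞ h(τ) dτ ≤ C·h(t)^{(1+γ)/2} for all t ≥ T. Then ∫_0^∞ h(τ)^{1/2} dτ < ∞, i.e. the function t ↦ √(h(t)) is integrable on [0,∞). -/
open MeasureTheory

set_option maxHeartbeats 1000000

/-- Standard ODE lemma: if `h ≥ 0` is continuous and integrable on `[0,∞)` and its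
tail integrals satisfy `∫_t^∞ h ≤ C·h(t)^{(1+γ)/2}` for `t ≥ T`, with `C > 0` and
`γ ∈ (0,1)`, then `√h` is integrable on `[0,∞)`. -/
theorem sqrt_integrable_of_tail_bound (h : ℝ → ℝ)
    (hcont : ContinuousOn h (Set.Ici 0))
    (hnonneg : ∀ t : ℝ, 0 ≤ t → 0 ≤ h t)
    (hint : IntegrableOn h (Set.Ici 0))
    (C γ T : ℝ) (hC : 0 < C) (hγ : γ ∈ Set.Ioo (0 : ℝ) 1) (hT : 0 ≤ T)
    (htail : ∀ t : ℝ, T ≤ t → ∫ τ in Set.Ici t, h τ ≤ C * h t ^ ((1 + γ) / 2)) :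
    IntegrableOn (fun t => Real.sqrt (h t)) (Set.Ici 0) := by
  obtain ⟨hγ0, hγ1⟩ := hγ
  have h1γ : (0:ℝ) < 1 + γ := by linarith
  obtain ⟨q, hq_def⟩ : ∃ q : ℝ, q = 2 / (1 + γ) := ⟨_, rfl⟩
  have hq1 : 1 < q := by
    rw [hq_def, lt_div_iff₀ h1γ]; linarith
  have hq0 : (0:ℝ) < q := by linarith
  have hq2 : q < 2 := by
    rw [hq_def, div_lt_iff₀ h1γ]; nlinarith
  have hCq : (0:ℝ) < C ^ q := Real.rpow_pos_of_pos hC q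
  obtain ⟨H, hH_def⟩ : ∃ H : ℝ → ℝ, H = fun t => ∫ τ in Set.Ici t, h τ := ⟨_, rfl⟩
  have hint' : ∀ t : ℝ, 0 ≤ t → IntegrableOn h (Set.Ici t) :=
    fun t ht => hint.mono_set (Set.Ici_subset_Ici.2 ht)
  have hHnonneg : ∀ t : ℝ, 0 ≤ t → 0 ≤ H t := by
    intro t ht
    simp only [hH_def]
    exact setIntegral_nonneg measurableSet_Ici fun x hx => hnonneg x (le_trans ht hx)
  have hsplit : ∀ s t : ℝ, 0 ≤ s → s ≤ t → H s = (∫ τ in Set.Ico s t, h τ) + H t := by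
    intro s t hs hst
    have e : Set.Ici s = Set.Ico s t ∪ Set.Ici t := (Set.Ico_union_Ici_eq_Ici hst).symm
    simp only [hH_def]
    rw [e, setIntegral_union (by simp [Set.disjoint_left]) measurableSet_Ici
      ((hint' s hs).mono_set Set.Ico_subset_Ici_self) (hint' t (le_trans hs hst))]
  have hHanti : ∀ s t : ℝ, 0 ≤ s → s ≤ t → H t ≤ H s := by
    intro s t hs hst
    rw [hsplit s t hs hst]
    have : 0 ≤ ∫ τ in Set.Ico s t, h τ :=
      setIntegral_nonneg measurableSet_Ico fun x hx => hnonneg x (le_trans hs hx.1)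
    linarith
  -- pointwise lower bound on h
  have hlow : ∀ t : ℝ, T ≤ t → H t ^ q ≤ C ^ q * h t := by
    intro t ht
    have h0t : 0 ≤ t := le_trans hT ht
    have htail' : H t ≤ C * h t ^ ((1+γ)/2) := by
      simp only [hH_def]; exact htail t ht
    calc H t ^ q ≤ (C * h t ^ ((1+γ)/2)) ^ q :=
          Real.rpow_le_rpow (hHnonneg t h0t) htail' hq0.le
      _ = C ^ q * (h t ^ ((1+γ)/2)) ^ q :=
          Real.mul_rpow hC.le (Real.rpow_nonneg (hnonneg t h0t) _)
      _ = C ^ q * h t := by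
          rw [← Real.rpow_mul (hnonneg t h0t)]
          have : (1+γ)/2 * q = 1 := by rw [hq_def]; field_simp
          rw [this, Real.rpow_one]
  -- key differential inequality in integral form
  have key : ∀ s t : ℝ, T ≤ s → s ≤ t → (t - s) * H t ^ q ≤ C ^ q * (H s - H t) := by
    intro s t hTs hst
    have h0s : 0 ≤ s := le_trans hT hTs
    have hm : ∀ x ∈ Set.Ico s t, H t ^ q / C ^ q ≤ h x := by
      intro x hx
      have hHx : H t ≤ H x := hHanti x t (le_trans h0s hx.1) hx.2.le
      have h1 : H t ^ q ≤ H x ^ q :=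
        Real.rpow_le_rpow (hHnonneg t (le_trans h0s hst)) hHx hq0.le
      have h2 := hlow x (le_trans hTs hx.1)
      rw [div_le_iff₀ hCq]
      nlinarith
    have hkey := setIntegral_ge_of_const_le (μ := volume) measurableSet_Ico
      (by simp) hm ((hint' s h0s).mono_set Set.Ico_subset_Ici_self)
    rw [Real.volume_real_Ico_of_le hst, smul_eq_mul, mul_comm] at hkey
    have heq : (∫ x in Set.Ico s t, h x) = H s - H t := by
      have := hsplit s t h0s hst; linarith
    rw [heq, div_mul_eq_mul_div, div_le_iff₀ hCq] at hkey
    nlinarith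
  -- dyadic decay
  obtain ⟨s₀, hs₀_def⟩ : ∃ s₀ : ℝ, s₀ = max T 1 := ⟨_, rfl⟩
  have hs₀T : T ≤ s₀ := hs₀_def ▸ le_max_left _ _
  have hs₀1 : (1:ℝ) ≤ s₀ := hs₀_def ▸ le_max_right _ _
  have hs₀0 : (0:ℝ) < s₀ := lt_of_lt_of_le one_pos hs₀1
  obtain ⟨a, ha_def⟩ : ∃ a : ℕ → ℝ, a = fun k => H (2 ^ k * s₀) := ⟨_, rfl⟩
  have hTk : ∀ k : ℕ, T ≤ 2 ^ k * s₀ := by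
    intro k
    have h1 : (1:ℝ) ≤ 2 ^ k := one_le_pow₀ (by norm_num)
    nlinarith
  have hanonneg : ∀ k, 0 ≤ a k := by
    intro k; simp only [ha_def]; exact hHnonneg _ (le_trans hT (hTk k))
  have hrec : ∀ k : ℕ, (2 ^ k * s₀) * a (k+1) ^ q ≤ C ^ q * (a k - a (k+1)) := by
    intro k
    have hpk : (0:ℝ) < 2 ^ k := pow_pos two_pos k
    have h1 := key (2 ^ k * s₀) (2 ^ (k+1) * s₀) (hTk k)
      (by rw [pow_succ]; nlinarith)
    have h2 : (2:ℝ) ^ (k+1) * s₀ - 2 ^ k * s₀ = 2 ^ k * s₀ := by rw [pow_succ]; ring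
    rw [h2] at h1
    simp only [ha_def]
    exact h1
  obtain ⟨β, hβ_def⟩ : ∃ β : ℝ, β = 1 / (q - 1) := ⟨_, rfl⟩
  have hβ1 : 1 < β := by
    rw [hβ_def, lt_div_iff₀ (by linarith)]; linarith
  have hq1' : q - 1 ≠ 0 := ne_of_gt (by linarith)
  have hβq' : β * (q - 1) = 1 := by rw [hβ_def]; field_simp
  have hβq : β * q = β + 1 := by nlinarith
  obtain ⟨B, hB_def⟩ : ∃ B : ℝ, B = (2:ℝ) ^ (-β) := ⟨_, rfl⟩
  have hB0 : (0:ℝ) < B := hB_def ▸ Real.rpow_pos_of_pos two_pos _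
  have hBq : B ^ q = B / 2 := by
    rw [hB_def, ← Real.rpow_mul (by norm_num : (0:ℝ) ≤ 2)]
    have e : -β * q = -β - 1 := by linarith
    rw [e, Real.rpow_sub two_pos, Real.rpow_one]
  -- choice of M
  obtain ⟨K, hK_def⟩ : ∃ K : ℝ, K = 2 * C ^ q / (B * s₀) := ⟨_, rfl⟩
  have hK0 : 0 < K := by rw [hK_def]; positivity
  obtain ⟨M, hM_def⟩ : ∃ M : ℝ, M = max (a 0) (max 1 (K ^ (1/(q-1)))) := ⟨_, rfl⟩
  have hM1 : (1:ℝ) ≤ M := hM_def ▸ le_trans (le_max_left _ _) (le_max_right _ _)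
  have hM0 : (0:ℝ) < M := lt_of_lt_of_le one_pos hM1
  have hMa : a 0 ≤ M := hM_def ▸ le_max_left _ _
  have hMkey : K ≤ M ^ (q-1) := by
    have h1 : K ^ (1/(q-1)) ≤ M := hM_def ▸ le_trans (le_max_right _ _) (le_max_right _ _)
    calc K = (K ^ (1/(q-1))) ^ (q-1) := by
            rw [← Real.rpow_mul hK0.le]
            rw [one_div_mul_cancel hq1', Real.rpow_one]
      _ ≤ M ^ (q-1) := Real.rpow_le_rpow (Real.rpow_nonneg hK0.le _) h1 (by linarith)
  have hMkey' : 2 * C ^ q ≤ M ^ (q-1) * (B * s₀) := by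
    rw [hK_def, div_le_iff₀ (by positivity)] at hMkey
    linarith
  have hMq : M ^ q = M * M ^ (q-1) := by
    nth_rewrite 1 [show q = 1 + (q-1) by ring]
    rw [Real.rpow_add hM0, Real.rpow_one]
  -- decay by induction
  have decay : ∀ k, a k ≤ M * B ^ k := by
    intro k
    induction k with
    | zero => simpa using hMa
    | succ k ih =>
      have hpk : (0:ℝ) < 2 ^ k := pow_pos two_pos k
      have hBk : (0:ℝ) < B ^ k := pow_pos hB0 k
      have e2 : ((B:ℝ) ^ (k+1)) ^ q = (B ^ q) ^ (k+1) := by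
        rw [← Real.rpow_natCast B (k+1), ← Real.rpow_mul hB0.le,
          mul_comm ((k+1 : ℕ) : ℝ) q, Real.rpow_mul hB0.le, Real.rpow_natCast]
      have goalq : a (k+1) ^ q ≤ (M * B ^ (k+1)) ^ q := by
        have hRHS : (M * B ^ (k+1)) ^ q = M ^ q * (B/2) ^ (k+1) := by
          rw [Real.mul_rpow hM0.le (pow_nonneg hB0.le _), e2, hBq]
        have c0 : a k - a (k+1) ≤ M * B ^ k := by linarith [hanonneg (k+1)]
        have c1 : a (k+1) ^ q * (2 ^ k * s₀) ≤ C ^ q * (M * B ^ k) := by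
          have c1a : C ^ q * (a k - a (k+1)) ≤ C ^ q * (M * B ^ k) :=
            mul_le_mul_of_nonneg_left c0 hCq.le
          have := hrec k
          linarith
        have e3 : ((B:ℝ)/2) ^ (k+1) * (2 ^ k) = B ^ (k+1) / 2 := by
          rw [div_pow, pow_succ (2:ℝ) k]
          field_simp
        have e4 : M ^ q * (B/2) ^ (k+1) * (2 ^ k * s₀)
            = M * M ^ (q-1) * (B * s₀) * B ^ k / 2 := by
          rw [hMq]
          have e5 : M * M ^ (q-1) * ((B/2) ^ (k+1) * (2:ℝ) ^ k) * s₀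
              = M * M ^ (q-1) * ((B/2) ^ (k+1)) * (2 ^ k * s₀) := by ring
          rw [← e5, e3, pow_succ]
          ring
        have c2 : C ^ q * (M * B ^ k) ≤ (M * B ^ (k+1)) ^ q * (2 ^ k * s₀) := by
          rw [hRHS, e4]
          have hh := mul_le_mul_of_nonneg_right hMkey' (mul_nonneg hM0.le hBk.le)
          nlinarith [hh]
        have hmain : a (k+1) ^ q * (2 ^ k * s₀) ≤ (M * B ^ (k+1)) ^ q * (2 ^ k * s₀) :=
          le_trans c1 c2
        exact le_of_mul_le_mul_right hmain (mul_pos hpk hs₀0)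
      by_contra hcon
      push_neg at hcon
      have hMB : (0:ℝ) ≤ M * B ^ (k+1) := mul_nonneg hM0.le (pow_nonneg hB0.le _)
      have : (M * B ^ (k+1)) ^ q < a (k+1) ^ q :=
        Real.rpow_lt_rpow hMB hcon hq0
      linarith
  -- geometric data
  obtain ⟨d, hd_def⟩ : ∃ d : ℝ, d = (2:ℝ) ^ (-(β+1)/2) := ⟨_, rfl⟩
  have hd0 : (0:ℝ) < d := hd_def ▸ Real.rpow_pos_of_pos two_pos _
  obtain ⟨r, hr_def⟩ : ∃ r : ℝ, r = (2:ℝ) ^ ((1-β)/2) := ⟨_, rfl⟩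
  have hr0 : (0:ℝ) < r := hr_def ▸ Real.rpow_pos_of_pos two_pos _
  have hr1 : r < 1 := hr_def ▸ Real.rpow_lt_one_of_one_lt_of_neg one_lt_two (by linarith)
  have hrd : r = 2 * d := by
    have e : (1-β)/2 - (-(β+1)/2) = 1 := by ring
    have h1 : r / d = 2 := by
      rw [hr_def, hd_def, ← Real.rpow_sub two_pos, e, Real.rpow_one]
    rw [div_eq_iff hd0.ne'] at h1
    rw [h1]
  have hBr : B = r * d := by
    have e : -β - (-(β+1)/2) = (1-β)/2 := by ring
    have h1 : B / d = r := by
      rw [hB_def, hd_def, hr_def, ← Real.rpow_sub two_pos, e]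
    rw [div_eq_iff hd0.ne'] at h1
    rw [h1]
  -- the dyadic intervals
  obtain ⟨I, hI_def⟩ : ∃ I : ℕ → Set ℝ, I = fun k => Set.Ico (2 ^ k * s₀) (2 ^ (k+1) * s₀) := ⟨_, rfl⟩
  have hImeas : ∀ k, MeasurableSet (I k) := by
    intro k; simp only [hI_def]; exact measurableSet_Ico
  have hIsub : ∀ k, I k ⊆ Set.Ici (0:ℝ) := by
    intro k x hx
    simp only [hI_def] at hx
    have hpk : (0:ℝ) < 2 ^ k := pow_pos two_pos k
    have : (0:ℝ) < 2 ^ k * s₀ := mul_pos hpk hs₀0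
    exact le_of_lt (lt_of_lt_of_le this hx.1)
  have hsqrtcont : ContinuousOn (fun t => Real.sqrt (h t)) (Set.Ici 0) :=
    Real.continuous_sqrt.comp_continuousOn hcont
  have hIk_int : ∀ k, IntegrableOn (fun t => Real.sqrt (h t)) (I k) := by
    intro k
    have hsub : Set.Icc (2 ^ k * s₀) (2 ^ (k+1) * s₀) ⊆ Set.Ici (0:ℝ) := by
      intro x hx
      have hpk : (0:ℝ) < 2 ^ k := pow_pos two_pos k
      have : (0:ℝ) < 2 ^ k * s₀ := mul_pos hpk hs₀0
      exact le_of_lt (lt_of_lt_of_le this hx.1)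
    simp only [hI_def]
    exact ((hsqrtcont.mono hsub).integrableOn_Icc).mono_set Set.Ico_subset_Icc_self
  have hIvol : ∀ k, (volume (I k)).toReal = 2 ^ k * s₀ := by
    intro k
    have hpk : (0:ℝ) < 2 ^ k := pow_pos two_pos k
    simp only [hI_def]
    rw [Real.volume_Ico, ENNReal.toReal_ofReal (by rw [pow_succ]; nlinarith)]
    rw [pow_succ]; ring
  have hIint : ∀ k, (∫ x in I k, h x) = a k - a (k+1) := by
    intro k
    have hpk : (0:ℝ) < 2 ^ k := pow_pos two_pos k
    have hsp := hsplit (2 ^ k * s₀) (2 ^ (k+1) * s₀) (le_of_lt (mul_pos hpk hs₀0))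
      (by rw [pow_succ]; nlinarith)
    simp only [ha_def, hI_def]
    linarith
  -- integral bound on each piece
  have hbound : ∀ k, (∫ x in I k, ‖Real.sqrt (h x)‖) ≤ (M + s₀) * r ^ k := by
    intro k
    have hdk : (0:ℝ) < d ^ k := pow_pos hd0 k
    have hnorm : (fun x => ‖Real.sqrt (h x)‖) = fun x => Real.sqrt (h x) :=
      funext fun x => Real.norm_of_nonneg (Real.sqrt_nonneg _)
    rw [hnorm]
    have hhint : IntegrableOn h (I k) := hint.mono_set (hIsub k)
    have hconst : IntegrableOn (fun _ : ℝ => (d:ℝ) ^ k) (I k) := by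
      simp only [hI_def]
      exact integrableOn_const measure_Ico_lt_top.ne
    have hg_int : IntegrableOn (fun x => h x * (d ^ k)⁻¹ + d ^ k) (I k) :=
      (hhint.mul_const _).add hconst
    have hle : (∫ x in I k, Real.sqrt (h x)) ≤ ∫ x in I k, (h x * (d ^ k)⁻¹ + d ^ k) := by
      apply setIntegral_mono_on (hIk_int k) hg_int (hImeas k)
      intro x hx
      have hh0 := hnonneg x (hIsub k hx)
      have hs := Real.sq_sqrt hh0
      have h1 : Real.sqrt (h x) * d ^ k ≤ h x + d ^ k * d ^ k := by
        nlinarith [sq_nonneg (Real.sqrt (h x) - d ^ k)]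
      rw [← sub_nonneg]
      have expand : h x * (d ^ k)⁻¹ + d ^ k - Real.sqrt (h x)
          = (h x + d ^ k * d ^ k - Real.sqrt (h x) * d ^ k) * (d ^ k)⁻¹ := by
        field_simp
      rw [expand]
      exact mul_nonneg (by linarith) (inv_nonneg.2 hdk.le)
    have heval : (∫ x in I k, (h x * (d ^ k)⁻¹ + d ^ k))
        = (a k - a (k+1)) * (d ^ k)⁻¹ + (2 ^ k * s₀) * d ^ k := by
      rw [integral_add (hhint.mul_const _) hconst, integral_mul_const,
        setIntegral_const, measureReal_def, hIint k, hIvol k, smul_eq_mul]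
    have hBk : B ^ k = r ^ k * d ^ k := by rw [hBr, mul_pow]
    have h5 : a k - a (k+1) ≤ M * B ^ k := by linarith [decay k, hanonneg (k+1)]
    have h6 : (a k - a (k+1)) * (d ^ k)⁻¹ ≤ M * r ^ k := by
      calc (a k - a (k+1)) * (d ^ k)⁻¹ ≤ M * B ^ k * (d ^ k)⁻¹ :=
            mul_le_mul_of_nonneg_right h5 (inv_nonneg.2 hdk.le)
        _ = M * r ^ k * (d ^ k * (d ^ k)⁻¹) := by rw [hBk]; ring
        _ = M * r ^ k := by rw [mul_inv_cancel₀ hdk.ne', mul_one]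
    have h7 : (2:ℝ) ^ k * s₀ * d ^ k = s₀ * r ^ k := by
      rw [hrd, mul_pow]; ring
    calc (∫ x in I k, Real.sqrt (h x))
        ≤ (a k - a (k+1)) * (d ^ k)⁻¹ + (2 ^ k * s₀) * d ^ k := by rw [← heval]; exact hle
      _ ≤ M * r ^ k + s₀ * r ^ k := by rw [h7] at *; linarith
      _ = (M + s₀) * r ^ k := by ring
  -- covering
  have cover : Set.Ici s₀ ⊆ ⋃ k, I k := by
    intro x hx
    have hx1 : (1:ℝ) ≤ x / s₀ := (one_le_div hs₀0).2 hx
    have hx0 : (0:ℝ) ≤ x / s₀ := by linarith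
    set n : ℕ := ⌊x / s₀⌋₊ with hn_def
    have hn1 : 1 ≤ n := Nat.le_floor (by exact_mod_cast hx1)
    set k : ℕ := Nat.log 2 n with hk_def
    have h2k : (2:ℕ) ^ k ≤ n := Nat.pow_log_le_self 2 (by omega)
    have h2k' : n < 2 ^ (k+1) := Nat.lt_pow_succ_log_self (by norm_num) n
    refine Set.mem_iUnion.2 ⟨k, ?_⟩
    simp only [hI_def]
    refine ⟨?_, ?_⟩
    · have hle : ((2:ℝ)) ^ k ≤ x / s₀ := by
        calc ((2:ℝ)) ^ k = ((2 ^ k : ℕ) : ℝ) := by push_cast; ring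
          _ ≤ (n : ℝ) := by exact_mod_cast h2k
          _ ≤ x / s₀ := Nat.floor_le hx0
      calc (2:ℝ) ^ k * s₀ ≤ (x / s₀) * s₀ := mul_le_mul_of_nonneg_right hle hs₀0.le
        _ = x := div_mul_cancel₀ x hs₀0.ne'
    · have h3 : x / s₀ < (n : ℝ) + 1 := Nat.lt_floor_add_one _
      have h4 : ((n : ℝ) + 1) ≤ 2 ^ (k+1) := by
        have : n + 1 ≤ 2 ^ (k+1) := h2k'
        calc ((n : ℝ) + 1) = ((n + 1 : ℕ) : ℝ) := by push_cast; ring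
          _ ≤ ((2 ^ (k+1) : ℕ) : ℝ) := by exact_mod_cast this
          _ = 2 ^ (k+1) := by push_cast; ring
      have h5 : x / s₀ < 2 ^ (k+1) := lt_of_lt_of_le h3 h4
      calc x = (x / s₀) * s₀ := (div_mul_cancel₀ x hs₀0.ne').symm
        _ < 2 ^ (k+1) * s₀ := mul_lt_mul_of_pos_right h5 hs₀0
  -- assemble
  have hsum : Summable fun k => ∫ x in I k, ‖Real.sqrt (h x)‖ :=
    Summable.of_nonneg_of_le
      (fun k => setIntegral_nonneg (hImeas k) fun x _ => norm_nonneg _)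
      hbound ((summable_geometric_of_lt_one hr0.le hr1).mul_left (M + s₀))
  have hunion : IntegrableOn (fun t => Real.sqrt (h t)) (⋃ k, I k) :=
    integrableOn_iUnion_of_summable_integral_norm hIk_int hsum
  have hIcc : IntegrableOn (fun t => Real.sqrt (h t)) (Set.Icc 0 s₀) :=
    (hsqrtcont.mono Set.Icc_subset_Ici_self).integrableOn_Icc
  have hsub : Set.Ici (0:ℝ) ⊆ Set.Icc 0 s₀ ∪ ⋃ k, I k := by
    intro x hx
    rcases le_total x s₀ with h' | h'
    · exact Or.inl ⟨hx, h'⟩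
    · exact Or.inr (cover h')
  exact (hIcc.union hunion).mono_set hsub
end
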